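/- For the ESN distribution (ESEP with α = 2), the asymptotic variance of the ML estimator of θ is Var(θ̂) = 2(α+1)Γ(1+1/α)Γ(1/α)σ²(1−ε²) / (αn[Γ(1+1/α)Γ(1−1/α)α² − Γ(1−1/α)Γ(1+1/α) − α²]) evaluated at α = 2, which equals the (1,1)-entry of the inverse of the Fisher information matrix for (θ,σ,ε). -/

import Mathlib

/-!
With `Γ(1 + 1/α) = Γ(1/α)/α` the σσ Fisher entry collapses to `α/σ²`, so it is nonzero and, since
σ is orthogonal to θ and ε, the (θ,θ) entry of the inverse is `I_εε / (I_θθ I_εε - I_θε²)`.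
Clearing denominators turns this into the stated closed form for every `α > 0`; the ESN case is
`α = 2`.
-/

open Real

/-- The Fisher information matrix of ESEP(θ,σ,ε,α) for (θ,σ,ε), scaled by sample size n. -/
noncomputable def esepFisher (n α σ ε : ℝ) : Matrix (Fin 3) (Fin 3) ℝ :=
  n • !![α * (α - 1) * Real.Gamma (1 - 1 / α) / (2 * σ ^ 2 * Real.Gamma (1 / α) * (1 - ε ^ 2)), 0,
        α ^ 2 / (Real.sqrt 2 * σ * Real.Gamma (1 / α) * (1 - ε ^ 2));
      0, -1 / σ ^ 2 + α * (α + 1) * Real.Gamma (1 + 1 / α) / (Real.Gamma (1 / α) * σ ^ 2), 0;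
      α ^ 2 / (Real.sqrt 2 * σ * Real.Gamma (1 / α) * (1 - ε ^ 2)), 0,
        α * (α + 1) * Real.Gamma (1 + 1 / α) / (Real.Gamma (1 / α) * (1 - ε ^ 2))]

theorem Matrix.inv_fin_three_zero_zero_of_zero_pattern {K : Type*} [Field K] {a b c c' d : K}
    (hb : b ≠ 0) : (!![a, 0, c; 0, b, 0; c', 0, d])⁻¹ 0 0 = d / (a * d - c * c') := by
  rw [Matrix.inv_def, Ring.inverse_eq_inv', Matrix.adjugate_fin_three, Matrix.det_fin_three]
  simp only [Matrix.smul_apply, Matrix.of_apply, Matrix.cons_val', Matrix.cons_val_zero,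
    Matrix.cons_val_one, Matrix.cons_val, Matrix.cons_val_fin_one, smul_eq_mul, mul_zero, zero_mul,
    sub_zero, add_zero, neg_zero, zero_sub]
  rw [show a * b * d - c * b * c' = b * (a * d - c * c') by ring, mul_inv]
  field_simp

theorem Real.mul_add_one_mul_Gamma_one_add_inv {α : ℝ} (hα : α ≠ 0) :
    α * (α + 1) * Gamma (1 + 1 / α) = (α + 1) * Gamma (1 / α) := by
  rw [add_comm 1, Gamma_add_one (one_div_ne_zero hα)]
  field_simp

theorem esepFisher_inv_zero_zero (n : ℝ) {α σ ε : ℝ} (hα : 0 < α) (hσ : σ ≠ 0)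
    (hε : 1 - ε ^ 2 ≠ 0) :
    (esepFisher n α σ ε)⁻¹ 0 0 =
      2 * (α + 1) * Gamma (1 + 1 / α) * Gamma (1 / α) * σ ^ 2 * (1 - ε ^ 2) /
        (α * n * (Gamma (1 + 1 / α) * Gamma (1 - 1 / α) * α ^ 2 -
          Gamma (1 - 1 / α) * Gamma (1 + 1 / α) - α ^ 2)) := by
  -- At `n = 0` both sides are junk zeros: `0⁻¹ = 0` for matrices and `x / 0 = 0`.
  rcases eq_or_ne n 0 with rfl | hn
  · simp [esepFisher]
  have hΓ : Gamma (1 / α) ≠ 0 := (Gamma_pos_of_pos (by positivity)).ne'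
  have hσσ : -1 / σ ^ 2 + α * (α + 1) * Gamma (1 + 1 / α) / (Gamma (1 / α) * σ ^ 2) =
      α / σ ^ 2 := by
    rw [mul_add_one_mul_Gamma_one_add_inv hα.ne']
    field_simp
    ring
  simp only [esepFisher, Matrix.smul_of, Matrix.smul_cons, Matrix.smul_empty, smul_eq_mul,
    mul_zero, hσσ]
  rw [Matrix.inv_fin_three_zero_zero_of_zero_pattern (by positivity)]
  -- The bracket may vanish, so the remaining factor `2` is cancelled without dividing by it.
  field_simp
  rw [sq_sqrt zero_le_two, one_div, ← div_mul_cancel_left₀ (two_ne_zero' ℝ)]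
  ring_nf

theorem esn_asymptotic_variance_theta_general (n σ ε : ℝ) (hσ : 0 < σ)
    (hε : ε ∈ Set.Ioo (-1 : ℝ) 1) :
    (esepFisher n 2 σ ε)⁻¹ 0 0 =
      2 * (2 + 1) * Real.Gamma (1 + 1 / 2) * Real.Gamma (1 / 2) * σ ^ 2 * (1 - ε ^ 2) /
        (2 * n * (Real.Gamma (1 + 1 / 2) * Real.Gamma (1 - 1 / 2) * 2 ^ 2 -
          Real.Gamma (1 - 1 / 2) * Real.Gamma (1 + 1 / 2) - 2 ^ 2)) :=
  esepFisher_inv_zero_zero n two_pos hσ.ne'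
    (sub_pos.2 ((sq_lt_one_iff_abs_lt_one ε).2 (abs_lt.2 hε))).ne'

/-- For ESN (ESEP with α = 2), the asymptotic variance of the ML estimator of θ, i.e. the
(1,1)-entry of the inverse Fisher information matrix, is given by the stated formula
evaluated at α = 2. -/
theorem esn_asymptotic_variance_theta (n σ ε : ℝ) (hn : 0 < n) (hσ : 0 < σ)
    (hε : ε ∈ Set.Ioo (-1 : ℝ) 1) :
    (esepFisher n 2 σ ε)⁻¹ 0 0 =
      2 * (2 + 1) * Real.Gamma (1 + 1 / 2) * Real.Gamma (1 / 2) * σ ^ 2 * (1 - ε ^ 2) /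
        (2 * n * (Real.Gamma (1 + 1 / 2) * Real.Gamma (1 - 1 / 2) * 2 ^ 2 -
          Real.Gamma (1 - 1 / 2) * Real.Gamma (1 + 1 / 2) - 2 ^ 2)) :=
  esn_asymptotic_variance_theta_general n σ ε hσ hε
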